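/- Let α > 0 and let x ∈ 𝒳 be a slowly oscillating periodic solution of Wright's equation x'(t) = -α(e^{x(t-1)} - 1). Then the minimum of x satisfies min_{t ∈ ℝ} x(t) = x(q(x)+1) ≥ -α(e^{M} - 1), where M = max_{t ∈ ℝ} x(t). -/

import Mathlib

open Real Set Filter Topology

noncomputable section

/-- `x` solves Wright's equation `x'(t) = -α (e^{x(t-1)} - 1)` on all of `ℝ`. -/
def WrightSol (α : ℝ) (x : ℝ → ℝ) : Prop :=
  ∀ t : ℝ, HasDerivAt x (-α * (Real.exp (x (t - 1)) - 1)) t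

/-- The space 𝒳: C¹ functions with `x 0 = 0`, `x' 0 > 0` and `x < 0` on `(-1,0)`. -/
def InX (x : ℝ → ℝ) : Prop :=
  ContDiff ℝ 1 x ∧ x 0 = 0 ∧ 0 < deriv x 0 ∧ ∀ t ∈ Set.Ioo (-1 : ℝ) 0, x t < 0

/-- A slowly oscillating periodic solution in 𝒳, with first zero `q` and data `qbar`:
positive on `(0,q)`, negative on `(q, q+qbar)`, periodic with minimal period `q+qbar`. -/
def SOPSX (α q qbar : ℝ) (x : ℝ → ℝ) : Prop :=
  InX x ∧ WrightSol α x ∧ 1 < q ∧ 1 < qbar ∧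
  (∀ t ∈ Set.Ioo 0 q, 0 < x t) ∧
  (∀ t ∈ Set.Ioo q (q + qbar), x t < 0) ∧
  Function.Periodic x (q + qbar) ∧
  (∀ T : ℝ, 0 < T → Function.Periodic x T → q + qbar ≤ T)

/-- A slowly oscillating periodic solution (up to time translation). -/
def SOPS (α : ℝ) (x : ℝ → ℝ) : Prop :=
  WrightSol α x ∧
  ∃ q qbar : ℝ, 1 < q ∧ 1 < qbar ∧
    (∃ τ : ℝ, (∀ t ∈ Set.Ioo 0 q, 0 < x (t + τ)) ∧
      (∀ t ∈ Set.Ioo q (q + qbar), x (t + τ) < 0)) ∧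
    Function.Periodic x (q + qbar) ∧
    (∀ T : ℝ, 0 < T → Function.Periodic x T → q + qbar ≤ T)

/-! The delayed feedback makes `x` decrease on `[q, q+1]` and increase on `[q+1, q+qbar+1]`,
so over the period window `[1, q+qbar+1]`, on whose remaining part `[1, q]` the solution is
nonnegative, the minimum is `x (q+1)`. For the bound, `x ≤ M` gives `x' ≥ -α (e^M - 1)`
everywhere, and integrating over `[q, q+1]` starting from `x q = 0` yields the estimate. -/

theorem ContinuousAt.eq_zero_of_pos_of_neg {f : ℝ → ℝ} {a b c : ℝ} (hf : ContinuousAt f b)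
    (hab : a < b) (hbc : b < c) (hpos : ∀ t ∈ Ioo a b, 0 < f t)
    (hneg : ∀ t ∈ Ioo b c, f t < 0) : f b = 0 := by
  have hle : f b ≤ 0 := le_of_tendsto (hf.mono_left nhdsWithin_le_nhds)
    (eventually_of_mem (Ioo_mem_nhdsGT hbc) fun t ht => (hneg t ht).le)
  have hge : 0 ≤ f b := ge_of_tendsto (hf.mono_left nhdsWithin_le_nhds)
    (eventually_of_mem (Ioo_mem_nhdsLT hab) fun t ht => (hpos t ht).le)
  exact le_antisymm hle hge

theorem Function.Periodic.forall_le_of_forall_mem_Icc {β : Type*} [Preorder β] {f : ℝ → β}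
    {L a : ℝ} {m : β} (hf : Function.Periodic f L) (hL : 0 < L) (h : ∀ s ∈ Icc a (a + L), m ≤ f s) (t : ℝ) :
    m ≤ f t := by
  obtain ⟨s, hs, hts⟩ := hf.exists_mem_Ico hL t a
  exact hts ▸ h s (Ico_subset_Icc_self hs)

namespace WrightSol

variable {α : ℝ} {x : ℝ → ℝ}

theorem differentiable (hx : WrightSol α x) : Differentiable ℝ x :=
  fun t => (hx t).differentiableAt

theorem continuous (hx : WrightSol α x) : Continuous x :=
  hx.differentiable.continuous

theorem antitoneOn_of_nonneg (hα : 0 ≤ α) (hx : WrightSol α x) {a b : ℝ}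
    (h : ∀ t ∈ Ioo a b, 0 ≤ x (t - 1)) : AntitoneOn x (Icc a b) := by
  refine antitoneOn_of_deriv_nonpos (convex_Icc a b) hx.continuous.continuousOn
    hx.differentiable.differentiableOn fun t ht => ?_
  rw [interior_Icc] at ht
  rw [(hx t).deriv]
  have : 0 ≤ exp (x (t - 1)) - 1 := by linarith [one_le_exp (h t ht)]
  nlinarith

theorem monotoneOn_of_nonpos (hα : 0 ≤ α) (hx : WrightSol α x) {a b : ℝ}
    (h : ∀ t ∈ Ioo a b, x (t - 1) ≤ 0) : MonotoneOn x (Icc a b) := by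
  refine monotoneOn_of_deriv_nonneg (convex_Icc a b) hx.continuous.continuousOn
    hx.differentiable.differentiableOn fun t ht => ?_
  rw [interior_Icc] at ht
  rw [(hx t).deriv]
  have : exp (x (t - 1)) - 1 ≤ 0 := by linarith [exp_le_one_iff.mpr (h t ht)]
  nlinarith

theorem mul_sub_le_sub_of_le (hα : 0 ≤ α) (hx : WrightSol α x) {M : ℝ} (hM : ∀ t, x t ≤ M)
    {s t : ℝ} (hst : s ≤ t) : -α * (exp M - 1) * (t - s) ≤ x t - x s := by
  refine mul_sub_le_image_sub_of_le_deriv hx.differentiable (fun u => ?_) hst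
  rw [(hx u).deriv]
  have := exp_le_exp.mpr (hM (u - 1))
  nlinarith

end WrightSol

namespace SOPSX

variable {α q qbar : ℝ} {x : ℝ → ℝ}

theorem apply_q_eq_zero (hx : SOPSX α q qbar x) : x q = 0 := by
  obtain ⟨-, hW, hq, hqb, hpos, hneg, -⟩ := hx
  exact hW.continuous.continuousAt.eq_zero_of_pos_of_neg (by linarith) (by linarith) hpos hneg

theorem apply_q_add_one_le (hα : 0 ≤ α) (hx : SOPSX α q qbar x) (t : ℝ) :
    x (q + 1) ≤ x t := by
  have hxq := hx.apply_q_eq_zero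
  obtain ⟨-, hW, hq, hqb, hpos, hneg, hper, -⟩ := hx
  have hdec : AntitoneOn x (Icc q (q + 1)) :=
    hW.antitoneOn_of_nonneg hα fun t ht => (hpos _ ⟨by linarith [ht.1], by linarith [ht.2]⟩).le
  have hinc : MonotoneOn x (Icc (q + 1) (q + qbar + 1)) :=
    hW.monotoneOn_of_nonpos hα fun t ht => (hneg _ ⟨by linarith [ht.1], by linarith [ht.2]⟩).le
  have hq1 : x (q + 1) ≤ 0 :=
    hxq ▸ hdec ⟨le_rfl, by linarith⟩ ⟨by linarith, le_rfl⟩ (by linarith)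
  refine hper.forall_le_of_forall_mem_Icc (by linarith) (a := 1) (fun s hs => ?_) t
  rcases le_or_gt s q with hsq | hqs
  · rcases hsq.lt_or_eq with hsq | rfl
    · exact hq1.trans (hpos s ⟨by linarith [hs.1], hsq⟩).le
    · exact hxq ▸ hq1
  rcases le_or_gt s (q + 1) with hs1 | hs1
  · exact hdec ⟨hqs.le, hs1⟩ ⟨by linarith, le_rfl⟩ hs1
  · exact hinc ⟨le_rfl, by linarith⟩ ⟨hs1.le, by linarith [hs.2]⟩ hs1.le

end SOPSX

theorem min_lower_bound (α q qbar : ℝ) (x : ℝ → ℝ) (hα : 0 < α)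
    (hx : SOPSX α q qbar x) :
    (∀ t : ℝ, x (q + 1) ≤ x t) ∧
    -α * (Real.exp (sSup (Set.range x)) - 1) ≤ x (q + 1) := by
  refine ⟨hx.apply_q_add_one_le hα.le, ?_⟩
  have hxq := hx.apply_q_eq_zero
  obtain ⟨-, hW, hq, hqb, -, -, hper, -⟩ := hx
  have hbdd : BddAbove (range x) :=
    (hper.compact_of_continuous (by linarith) hW.continuous).bddAbove
  have hstep := hW.mul_sub_le_sub_of_le hα.le (fun t => le_csSup hbdd (mem_range_self t))
    (le_add_of_nonneg_right zero_le_one : q ≤ q + 1)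
  rwa [hxq, add_sub_cancel_left, mul_one, sub_zero] at hstep
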